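/- arXiv:2409.00243 — 2 statements merged into one kernel-verified Lean document; each statement's English description precedes it below -/
import Mathlib

section
/- Let c_e be continuous and nondecreasing cost functions on each edge e of a network. If (y, x) with multipliers (ν, λ, μ) is a Wardrop equilibrium for demand vector d, and (y', x') with multipliers (ν', λ', μ') is a Wardrop equilibrium for demand vector d', where the multipliers satisfy the KKT conditions c_e(x_e) = λ_e, ν_θ = Σ_{e∈E} λ_e a_{e,s} − μ_{θ,i} for every path s_{θ,i}, and complementary slackness μ_{θ,i} y_{θ,i} = 0 with all μ, y nonnegative, then (ν' − ν)ᵀ(d' − d) ≥ μ'ᵀ y + μᵀ y' ≥ 0. -/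
/-!
Both flows can be compared path by path through the KKT conditions: the change of the OD
potential `ν' − ν` along a path equals the change of the edge prices `λ' − λ` summed along
it, minus `μ' − μ`. Pairing with the flow change `y' − y` and regrouping by OD pair and by
edge gives `(ν' − ν)ᵀ(d' − d) = (λ' − λ)ᵀ(x' − x) − (μ' − μ)ᵀ(y' − y)`. The first term is
nonnegative since `λ = c(x)` with `c` monotone edgewise, and by complementary slackness the
second is `μ'ᵀy + μᵀy'`, a sum of products of nonnegative numbers.
-/

open Finset

section

variable {R Θ E P : Type*} [CommSemiring R] [Fintype P]

theorem sum_mul_eq_sum_comp_mul_of_sum_ite_eq [Fintype Θ] [DecidableEq Θ]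
    (od : P → Θ) (f D : Θ → R) (g : P → R)
    (hD : ∀ θ, ∑ p, (if od p = θ then g p else 0) = D θ) :
    ∑ θ, f θ * D θ = ∑ p, f (od p) * g p := by
  simp_rw [← hD, mul_sum, mul_ite, mul_zero]
  rw [sum_comm]
  simp [eq_comm]

theorem sum_sum_mul_mul_eq_sum_mul_sum_mul [Fintype E] (a : E → P → R) (w : E → R)
    (z : P → R) :
    ∑ p, (∑ e, w e * a e p) * z p = ∑ e, w e * ∑ p, a e p * z p := by
  simp_rw [sum_mul, mul_sum, mul_assoc]
  exact sum_comm

end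

theorem wardrop_demand_sensitivity_general
    {Θ E P : Type*} [Fintype Θ] [DecidableEq Θ] [Fintype E] [Fintype P]
    (od : P → Θ) (a : E → P → ℝ)
    (c : E → ℝ → ℝ)
    (hc_mono : ∀ e, Monotone (c e))
    (d d' : Θ → ℝ)
    (y y' : P → ℝ)
    (hy : ∀ p, 0 ≤ y p) (hy' : ∀ p, 0 ≤ y' p)
    (hfeas : ∀ θ, ∑ p, (if od p = θ then y p else 0) = d θ)
    (hfeas' : ∀ θ, ∑ p, (if od p = θ then y' p else 0) = d' θ)
    (x x' : E → ℝ)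
    (hx : ∀ e, x e = ∑ p, a e p * y p)
    (hx' : ∀ e, x' e = ∑ p, a e p * y' p)
    (ν ν' : Θ → ℝ) (lam lam' : E → ℝ) (μ μ' : P → ℝ)
    (hμ : ∀ p, 0 ≤ μ p) (hμ' : ∀ p, 0 ≤ μ' p)
    (hKKT1 : ∀ e, c e (x e) = lam e)
    (hKKT1' : ∀ e, c e (x' e) = lam' e)
    (hKKT2 : ∀ p, ν (od p) = (∑ e, lam e * a e p) - μ p)
    (hKKT2' : ∀ p, ν' (od p) = (∑ e, lam' e * a e p) - μ' p)
    (hKKT3 : ∀ p, μ p * y p = 0)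
    (hKKT3' : ∀ p, μ' p * y' p = 0) :
    (∑ θ, (ν' θ - ν θ) * (d' θ - d θ)) ≥ (∑ p, μ' p * y p) + (∑ p, μ p * y' p) ∧
    (∑ p, μ' p * y p) + (∑ p, μ p * y' p) ≥ 0 := by
  have hdemand : ∀ θ, ∑ p, (if od p = θ then y' p - y p else 0) = d' θ - d θ := fun θ => by
    simp only [← hfeas, ← hfeas', ← sum_sub_distrib, ite_sub_ite, sub_zero]
  have hload : ∀ e, ∑ p, a e p * (y' p - y p) = x' e - x e := fun e => by
    simp only [hx, hx', mul_sub, sum_sub_distrib]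
  have hpath : ∀ p, (ν' (od p) - ν (od p)) * (y' p - y p) =
      (∑ e, (lam' e - lam e) * a e p) * (y' p - y p) + (μ' p * y p + μ p * y' p) := fun p => by
    simp only [hKKT2, hKKT2', sub_mul, sum_sub_distrib]
    linear_combination -hKKT3' p - hKKT3 p
  have hedge : 0 ≤ ∑ e, (lam' e - lam e) * (x' e - x e) := sum_nonneg fun e _ => by
    rw [← hKKT1, ← hKKT1']
    exact ((hc_mono e).monovary monotone_id).sub_mul_sub_nonneg (x e) (x' e)
  have hslack : 0 ≤ ∑ p, μ' p * y p + ∑ p, μ p * y' p :=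
    add_nonneg (sum_nonneg fun p _ => mul_nonneg (hμ' p) (hy p))
      (sum_nonneg fun p _ => mul_nonneg (hμ p) (hy' p))
  have hsplit : ∑ θ, (ν' θ - ν θ) * (d' θ - d θ) =
      ∑ e, (lam' e - lam e) * (x' e - x e) + (∑ p, μ' p * y p + ∑ p, μ p * y' p) := by
    rw [sum_mul_eq_sum_comp_mul_of_sum_ite_eq od _ _ _ hdemand]
    simp only [hpath, sum_add_distrib, sum_sum_mul_mul_eq_sum_mul_sum_mul, hload]
  exact ⟨by linarith, hslack⟩

/-- Demand-sensitivity of Wardrop equilibria (Proposition 2):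
`(ν' − ν)ᵀ(d' − d) ≥ μ'ᵀ y + μᵀ y' ≥ 0`. -/
theorem wardrop_demand_sensitivity
    {Θ E P : Type*} [Fintype Θ] [DecidableEq Θ] [Fintype E] [Fintype P]
    (od : P → Θ) (a : E → P → ℝ)
    (ha : ∀ e p, a e p = 0 ∨ a e p = 1)
    (c : E → ℝ → ℝ)
    (hc_cont : ∀ e, Continuous (c e))
    (hc_mono : ∀ e, Monotone (c e))
    (d d' : Θ → ℝ)
    (y y' : P → ℝ)
    (hy : ∀ p, 0 ≤ y p) (hy' : ∀ p, 0 ≤ y' p)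
    (hfeas : ∀ θ, ∑ p, (if od p = θ then y p else 0) = d θ)
    (hfeas' : ∀ θ, ∑ p, (if od p = θ then y' p else 0) = d' θ)
    (x x' : E → ℝ)
    (hx : ∀ e, x e = ∑ p, a e p * y p)
    (hx' : ∀ e, x' e = ∑ p, a e p * y' p)
    (ν ν' : Θ → ℝ) (lam lam' : E → ℝ) (μ μ' : P → ℝ)
    (hμ : ∀ p, 0 ≤ μ p) (hμ' : ∀ p, 0 ≤ μ' p)
    (hKKT1 : ∀ e, c e (x e) = lam e)
    (hKKT1' : ∀ e, c e (x' e) = lam' e)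
    (hKKT2 : ∀ p, ν (od p) = (∑ e, lam e * a e p) - μ p)
    (hKKT2' : ∀ p, ν' (od p) = (∑ e, lam' e * a e p) - μ' p)
    (hKKT3 : ∀ p, μ p * y p = 0)
    (hKKT3' : ∀ p, μ' p * y' p = 0) :
    (∑ θ, (ν' θ - ν θ) * (d' θ - d θ)) ≥ (∑ p, μ' p * y p) + (∑ p, μ p * y' p) ∧
    (∑ p, μ' p * y p) + (∑ p, μ p * y' p) ≥ 0 :=
  wardrop_demand_sensitivity_general od a c hc_mono d d' y y' hy hy' hfeas hfeas' x x' hx hx' ν ν'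
    lam lam' μ μ' hμ hμ' hKKT1 hKKT1' hKKT2 hKKT2' hKKT3 hKKT3'
end

section
/- Existence and uniqueness of equilibrium edge loads: if each edge cost c_e : ℝ_{≥0} → ℝ is continuous and strictly increasing, then the Beckmann potential Φ(y) = Σ_e ∫₀^{x_e(y)} c_e(z) dz, minimized over the compact convex polytope of feasible path flows {y : y_{θ,i} ≥ 0, Σ_i y_{θ,i} = d_θ}, attains its minimum, and any two minimizers y, y' induce the same edge loads: x_e(y) = x_e(y') for every edge e. -/
/-!
The Beckmann potential factors as `Φ = G ∘ A` with `A y = a *ᵥ y` the (linear) edge-load map and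
`G u = ∑ e, ∫₀^{u e} c e`. Each summand of `G` is the primitive of a strictly increasing function,
hence strictly convex, and so `G` is strictly convex on the convex set `A '' K`. Minimizers of `Φ`
over `K` are therefore sent by `A` to minimizers of `G` over `A '' K`, of which there is only one.
Existence is compactness of the polytope `K ⊆ ∏ p, [0, d (od p)]` together with continuity of `Φ`.
-/

open Finset Set

lemma StrictMono.strictConvexOn_univ_primitive {f : ℝ → ℝ} (hf : Continuous f)
    (hmono : StrictMono f) (a : ℝ) :
    StrictConvexOn ℝ univ (fun z => ∫ t in a..z, f t) := by
  refine StrictMono.strictConvexOn_univ_of_deriv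
    (intervalIntegral.continuous_primitive (fun _ _ => hf.intervalIntegrable _ _) a) ?_
  rwa [funext (hf.deriv_integral f a)]

lemma strictConvexOn_univ_sum_apply {ι E : Type*} [Fintype ι] [AddCommGroup E] [Module ℝ E]
    {F : ι → E → ℝ} (hF : ∀ i, StrictConvexOn ℝ univ (F i)) :
    StrictConvexOn ℝ univ (fun x : ι → E => ∑ i, F i (x i)) := by
  refine ⟨convex_univ, fun x _ y _ hxy a b ha hb hab => ?_⟩
  obtain ⟨i, hi⟩ := Function.ne_iff.1 hxy
  calc ∑ j, F j ((a • x + b • y) j)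
      < ∑ j, (a • F j (x j) + b • F j (y j)) :=
        Finset.sum_lt_sum
          (fun j _ => (hF j).convexOn.2 (mem_univ _) (mem_univ _) ha.le hb.le hab)
          ⟨i, mem_univ i, (hF i).2 (mem_univ _) (mem_univ _) hi ha hb hab⟩
    _ = a • ∑ j, F j (x j) + b • ∑ j, F j (y j) := by
        simp only [Finset.sum_add_distrib, Finset.smul_sum]

lemma StrictConvexOn.apply_eq_of_isMinOn_comp {𝕜 V W β : Type*} [Field 𝕜] [LinearOrder 𝕜]
    [IsStrictOrderedRing 𝕜] [AddCommMonoid β] [PartialOrder β] [IsOrderedAddMonoid β]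
    [AddCommMonoid W] [SMul 𝕜 W] [Module 𝕜 β] [PosSMulMono 𝕜 β]
    {T : V → W} {s : Set V} {G : W → β} (hG : StrictConvexOn 𝕜 (T '' s) G) {x y : V}
    (hx : IsMinOn (G ∘ T) s x) (hy : IsMinOn (G ∘ T) s y) (hxs : x ∈ s) (hys : y ∈ s) :
    T x = T y :=
  hG.eq_of_isMinOn (forall_mem_image.2 hx) (forall_mem_image.2 hy)
    (mem_image_of_mem T hxs) (mem_image_of_mem T hys)

section PathFlowPolytope

variable {Θ P : Type*} [DecidableEq Θ] [Fintype P]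

def pathFlowPolytope (od : P → Θ) (d : Θ → ℝ) : Set (P → ℝ) :=
  {y | (∀ p, 0 ≤ y p) ∧ ∀ θ, ∑ p, (if od p = θ then y p else 0) = d θ}

lemma convex_pathFlowPolytope (od : P → Θ) (d : Θ → ℝ) : Convex ℝ (pathFlowPolytope od d) := by
  rintro y ⟨hy0, hyd⟩ z ⟨hz0, hzd⟩ a b ha hb hab
  refine ⟨fun p => ?_, fun θ => ?_⟩
  · simp only [Pi.add_apply, Pi.smul_apply, smul_eq_mul]
    exact add_nonneg (mul_nonneg ha (hy0 p)) (mul_nonneg hb (hz0 p))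
  · simp only [← Finset.sum_filter] at hyd hzd ⊢
    simp only [Pi.add_apply, Pi.smul_apply, smul_eq_mul, Finset.sum_add_distrib,
      ← Finset.mul_sum, hyd, hzd, ← add_mul, hab, one_mul]

lemma isCompact_pathFlowPolytope (od : P → Θ) (d : Θ → ℝ) :
    IsCompact (pathFlowPolytope od d) := by
  have hclosed : IsClosed (pathFlowPolytope od d) := by
    simp only [pathFlowPolytope, ← Finset.sum_filter, ofPred_and, ofPred_forall]
    exact (isClosed_iInter fun p => isClosed_le continuous_const (continuous_apply p)).inter
      (isClosed_iInter fun θ => isClosed_eq (by fun_prop) continuous_const)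
  have hbounded : pathFlowPolytope od d ⊆ univ.pi fun p => Icc 0 (d (od p)) := by
    rintro y ⟨hy0, hyd⟩ p -
    refine ⟨hy0 p, ?_⟩
    rw [← hyd (od p), ← Finset.sum_filter]
    exact Finset.single_le_sum (fun q _ => hy0 q) (by simp)
  exact (isCompact_univ_pi fun p => isCompact_Icc).of_isClosed_subset hclosed hbounded

end PathFlowPolytope

theorem beckmann_exists_unique_loads_general
    {Θ E P : Type*} [DecidableEq Θ] [Fintype E] [Fintype P]
    (od : P → Θ) (a : E → P → ℝ)
    (d : Θ → ℝ)
    (c : E → ℝ → ℝ)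
    (hc_cont : ∀ e, Continuous (c e))
    (hc_mono : ∀ e, StrictMono (c e))
    (K : Set (P → ℝ))
    (hK : K = {y | (∀ p, 0 ≤ y p) ∧ ∀ θ, ∑ p, (if od p = θ then y p else 0) = d θ})
    (hKne : K.Nonempty)
    (x : (P → ℝ) → E → ℝ)
    (hx : ∀ y e, x y e = ∑ p, a e p * y p)
    (Φ : (P → ℝ) → ℝ)
    (hΦ : ∀ y, Φ y = ∑ e, ∫ z in (0:ℝ)..(x y e), c e z) :
    (∃ y ∈ K, ∀ y' ∈ K, Φ y ≤ Φ y') ∧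
    (∀ y ∈ K, ∀ y' ∈ K, (∀ z ∈ K, Φ y ≤ Φ z) → (∀ z ∈ K, Φ y' ≤ Φ z) →
      ∀ e, x y e = x y' e) := by
  set G : (E → ℝ) → ℝ := fun u => ∑ e, ∫ z in (0:ℝ)..(u e), c e z
  have hxA : x = Matrix.mulVecLin a := funext fun y => funext (hx y)
  have hΦGA : Φ = G ∘ Matrix.mulVecLin a := funext fun y => by simp [hΦ, G, hxA]
  have hK' : K = pathFlowPolytope od d := hK
  subst hxA hΦGA hK'
  have hG : StrictConvexOn ℝ univ G :=
    strictConvexOn_univ_sum_apply fun e => (hc_mono e).strictConvexOn_univ_primitive (hc_cont e) 0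
  have hGcont : Continuous G := continuous_finsetSum _ fun e _ =>
    (intervalIntegral.continuous_primitive (fun _ _ => (hc_cont e).intervalIntegrable _ _) 0).comp
      (continuous_apply e)
  refine ⟨?_, fun y hy y' hy' hmin hmin' => congrFun ?_⟩
  · obtain ⟨y, hy, hmin⟩ := (isCompact_pathFlowPolytope od d).exists_isMinOn hKne
      (hGcont.comp (Matrix.mulVecLin a).continuous_of_finiteDimensional).continuousOn
    exact ⟨y, hy, hmin⟩
  · exact (hG.subset (subset_univ _)
      ((convex_pathFlowPolytope od d).linear_image _)).apply_eq_of_isMinOn_comp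
      hmin hmin' hy hy'

/-- Existence and uniqueness of equilibrium edge loads: the Beckmann potential
attains its minimum over the feasible path-flow polytope, and any two minimizers
induce the same edge loads. -/
theorem beckmann_exists_unique_loads
    {Θ E P : Type*} [Fintype Θ] [DecidableEq Θ] [Fintype E] [Fintype P]
    (od : P → Θ) (a : E → P → ℝ)
    (ha : ∀ e p, a e p = 0 ∨ a e p = 1)
    (d : Θ → ℝ) (hd : ∀ θ, 0 ≤ d θ)
    (c : E → ℝ → ℝ)
    (hc_cont : ∀ e, Continuous (c e))
    (hc_mono : ∀ e, StrictMono (c e))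
    (K : Set (P → ℝ))
    (hK : K = {y | (∀ p, 0 ≤ y p) ∧ ∀ θ, ∑ p, (if od p = θ then y p else 0) = d θ})
    (hKne : K.Nonempty)
    (x : (P → ℝ) → E → ℝ)
    (hx : ∀ y e, x y e = ∑ p, a e p * y p)
    (Φ : (P → ℝ) → ℝ)
    (hΦ : ∀ y, Φ y = ∑ e, ∫ z in (0:ℝ)..(x y e), c e z) :
    (∃ y ∈ K, ∀ y' ∈ K, Φ y ≤ Φ y') ∧
    (∀ y ∈ K, ∀ y' ∈ K, (∀ z ∈ K, Φ y ≤ Φ z) → (∀ z ∈ K, Φ y' ≤ Φ z) →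
      ∀ e, x y e = x y' e) :=
  beckmann_exists_unique_loads_general od a d c hc_cont hc_mono K hK hKne x hx Φ hΦ
end
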